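/- Fix γ > 1, d ≥ 1, and β ∈ (0,1]. Let u(α) = u₀ + α·w be an affine path of Euler states whose density component ρ(α) satisfies ρ(1) = ρ_safe > 0, and let p(u) = (γ−1)(E − ‖m‖²/(2ρ)) with p_safe = p(u(1)) > 0. Suppose α_ρ ≤ 1 is such that ρ(α′) ≥ β·ρ_safe for all α′ ∈ [α_ρ, 1] (the outcome of the density correction), and suppose ρ(α′) > 0 for all α′ ∈ [α_ρ, 1]. If p(u(α_ρ)) < β·p_safe, then there exists α_p ∈ (α_ρ, 1] with p(u(α_p)) = β·p_safe, and the corrected state u(α_p) satisfies both goal conditions: ρ(α_p) ≥ β·ρ_safe > 0 and p(u(α_p)) = β·p_safe > 0. If instead p(u(α_ρ)) ≥ β·p_safe, then u(α_ρ) already satisfies both goal conditions. -/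
import Mathlib


/-- Two-step limiter. Along the affine path `u(α) = u₀ + α w` with
`ρ(1) = ρ_safe > 0`, `p_safe = p(u(1)) > 0`, suppose `α_ρ ≤ 1` is such that
`ρ(α') ≥ β ρ_safe` and `ρ(α') > 0` for all `α' ∈ [α_ρ, 1]`. If
`p(u(α_ρ)) < β p_safe` then there is `α_p ∈ (α_ρ, 1]` with `p(u(α_p)) = β p_safe`
and the corrected state satisfies both goals: `ρ(α_p) ≥ β ρ_safe > 0` and
`p(u(α_p)) = β p_safe > 0`. If instead `p(u(α_ρ)) ≥ β p_safe`, then `u(α_ρ)`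
already satisfies both goal conditions. -/
theorem two_step_limiter
    (γ : ℝ) (hγ : 1 < γ) (d : ℕ) (hd : 1 ≤ d)
    (β : ℝ) (hβ : β ∈ Set.Ioc (0 : ℝ) 1)
    (p : ℝ × EuclideanSpace ℝ (Fin d) × ℝ → ℝ)
    (hp : ∀ v : ℝ × EuclideanSpace ℝ (Fin d) × ℝ,
      p v = (γ - 1) * (v.2.2 - ‖v.2.1‖ ^ 2 / (2 * v.1)))
    (u₀ w : ℝ × EuclideanSpace ℝ (Fin d) × ℝ)
    (u : ℝ → ℝ × EuclideanSpace ℝ (Fin d) × ℝ)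
    (hu : ∀ α : ℝ, u α = u₀ + α • w)
    (ρsafe psafe : ℝ) (hρsafe : ρsafe = (u 1).1) (hpsafe : psafe = p (u 1))
    (hρsafe_pos : 0 < ρsafe) (hpsafe_pos : 0 < psafe)
    (αρ : ℝ) (hαρ : αρ ≤ 1)
    (hdens_goal : ∀ α' ∈ Set.Icc αρ (1 : ℝ), β * ρsafe ≤ (u α').1)
    (hdens_pos : ∀ α' ∈ Set.Icc αρ (1 : ℝ), 0 < (u α').1) :
    (p (u αρ) < β * psafe →
      ∃ αp ∈ Set.Ioc αρ (1 : ℝ), p (u αp) = β * psafe ∧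
        β * ρsafe ≤ (u αp).1 ∧ 0 < β * ρsafe ∧ 0 < β * psafe) ∧
    (β * psafe ≤ p (u αρ) →
      β * ρsafe ≤ (u αρ).1 ∧ β * psafe ≤ p (u αρ)) := by
  obtain ⟨hβ0, hβ1⟩ := hβ
  have hcomp : ∀ α : ℝ, p (u α)
      = (γ - 1) * ((u₀.2.2 + α * w.2.2)
        - ‖u₀.2.1 + α • w.2.1‖ ^ 2 / (2 * (u₀.1 + α * w.1))) := by
    intro α
    rw [hp, hu]
    simp [Prod.add_def, Prod.smul_def, smul_eq_mul]
  have hfst : ∀ α : ℝ, (u α).1 = u₀.1 + α * w.1 := by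
    intro α; rw [hu]; simp [Prod.add_def, Prod.smul_def, smul_eq_mul]
  have hc : ContinuousOn (fun α => p (u α)) (Set.Icc αρ 1) := by
    simp only [hcomp]
    apply ContinuousOn.mul continuousOn_const
    apply ContinuousOn.sub (by fun_prop)
    apply ContinuousOn.div (by fun_prop) (by fun_prop)
    intro x hx
    have h := hdens_pos x hx
    rw [hfst] at h
    positivity
  have hβp : β * psafe ≤ psafe := by nlinarith
  have hβρ_pos : 0 < β * ρsafe := by positivity
  have hβp_pos : 0 < β * psafe := by positivity
  constructor
  · intro hlt
    have hmem : β * psafe ∈ Set.Icc (p (u αρ)) (p (u 1)) :=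
      ⟨le_of_lt hlt, by rw [← hpsafe]; exact hβp⟩
    obtain ⟨αp, hαp, heq⟩ := intermediate_value_Icc hαρ hc hmem
    have hne : αρ < αp := by
      rcases lt_or_eq_of_le hαp.1 with h | h
      · exact h
      · exfalso; rw [← h] at heq; linarith [heq ▸ hlt]
    exact ⟨αp, ⟨hne, hαp.2⟩, heq, hdens_goal αp hαp, hβρ_pos, hβp_pos⟩
  · intro hge
    exact ⟨hdens_goal αρ ⟨le_refl _, hαρ⟩, hge⟩
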